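/- Let ρ : ℝ → ℝ be C¹ and convex, with derivative bounded: 0 ≤ ρ' ≤ γ for a constant γ > 0. Then for any A, B ∈ ℝ^{2×2}, (ρ'(det A) cof A − ρ'(det B) cof B)·(A − B) ≥ −γ |A − B|². -/

import Mathlib

/-- The cofactor matrix of a 2×2 real matrix. -/
def cof (A : Matrix (Fin 2) (Fin 2) ℝ) : Matrix (Fin 2) (Fin 2) ℝ :=
  !![A 1 1, -(A 1 0); -(A 0 1), A 0 0]

/-- The Frobenius inner product of two 2×2 real matrices. -/
def finner (M N : Matrix (Fin 2) (Fin 2) ℝ) : ℝ :=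
  ∑ i : Fin 2, ∑ j : Fin 2, M i j * N i j

/-!
Write `N = A - B`, `p = ρ'(det A)`, `q = ρ'(det B)`. Expanding the determinant,
`cof A · N = det A - det B + det N` and `cof B · N = det A - det B - det N`, so the inner product is
`(p - q)(det A - det B) + (p + q) det N`. The first term is nonnegative because `ρ'` is monotone,
and `(p + q) det N ≥ -(p + q) |N|² / 2 ≥ -γ |N|²` because `0 ≤ p, q ≤ γ`.
-/

section

open Matrix

variable (A B M N : Matrix (Fin 2) (Fin 2) ℝ)

theorem finner_smul_sub_smul (p q : ℝ) :
    finner (p • M - q • N) (A - B) = p * finner M (A - B) - q * finner N (A - B) := by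
  simp only [finner, Fin.sum_univ_two, Matrix.sub_apply, Matrix.smul_apply, smul_eq_mul]
  ring

theorem det_eq_det_sub_add : A.det = (A - B).det + B.det + finner (cof B) (A - B) := by
  simp only [det_fin_two, finner, cof, Fin.sum_univ_two, Matrix.sub_apply, of_apply, cons_val',
    cons_val_zero, cons_val_one, empty_val', cons_val_fin_one]
  ring

theorem finner_cof_sub_right : finner (cof B) (A - B) = A.det - B.det - (A - B).det := by
  linarith [det_eq_det_sub_add A B]

theorem finner_cof_sub_left : finner (cof A) (A - B) = A.det - B.det + (A - B).det := by
  have hneg : finner (cof A) (B - A) = -finner (cof A) (A - B) := by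
    simp only [finner, Fin.sum_univ_two, Matrix.sub_apply]
    ring
  have hdet : (B - A).det = (A - B).det := by
    rw [← neg_sub, det_neg, Fintype.card_fin]
    norm_num
  linarith [det_eq_det_sub_add B A]

theorem abs_det_le_half_sum_sq : |N.det| ≤ (∑ i, ∑ j, N i j ^ 2) / 2 := by
  simp only [det_fin_two, Fin.sum_univ_two]
  rw [abs_le]
  constructor <;>
    nlinarith [sq_nonneg (N 0 0 + N 1 1), sq_nonneg (N 0 0 - N 1 1),
      sq_nonneg (N 0 1 + N 1 0), sq_nonneg (N 0 1 - N 1 0)]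

end

theorem nonlinear_term_lower_bound_general (ρ : ℝ → ℝ) (γ : ℝ)
    (hρ : ContDiff ℝ 1 ρ) (hconv : ConvexOn ℝ Set.univ ρ)
    (hbound : ∀ s : ℝ, 0 ≤ deriv ρ s ∧ deriv ρ s ≤ γ)
    (A B : Matrix (Fin 2) (Fin 2) ℝ) :
    -γ * ∑ i : Fin 2, ∑ j : Fin 2, (A i j - B i j) ^ 2 ≤
      finner (deriv ρ A.det • cof A - deriv ρ B.det • cof B) (A - B) := by
  have hmono : Monotone (deriv ρ) := monotoneOn_univ.mp <|
    hconv.monotoneOn_deriv fun x _ ↦ (hρ.differentiable one_ne_zero).differentiableAt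
  have hdet_mono : 0 ≤ (deriv ρ A.det - deriv ρ B.det) * (A.det - B.det) :=
    (hmono.monovary monotone_id).sub_mul_sub_nonneg B.det A.det
  have hdet_sub : -(∑ i, ∑ j, (A i j - B i j) ^ 2) / 2 ≤ (A - B).det := by
    have := abs_det_le_half_sum_sq (A - B)
    simp only [Matrix.sub_apply] at this
    linarith [neg_abs_le (A - B).det]
  obtain ⟨hp₀, hpγ⟩ := hbound A.det
  obtain ⟨hq₀, hqγ⟩ := hbound B.det
  calc -γ * ∑ i, ∑ j, (A i j - B i j) ^ 2
      ≤ (deriv ρ A.det + deriv ρ B.det) * (-(∑ i, ∑ j, (A i j - B i j) ^ 2) / 2) := by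
        nlinarith [show 0 ≤ ∑ i : Fin 2, ∑ j : Fin 2, (A i j - B i j) ^ 2 by positivity]
    _ ≤ (deriv ρ A.det + deriv ρ B.det) * (A - B).det :=
        mul_le_mul_of_nonneg_left hdet_sub (by linarith)
    _ ≤ (deriv ρ A.det - deriv ρ B.det) * (A.det - B.det) +
          (deriv ρ A.det + deriv ρ B.det) * (A - B).det :=
        le_add_of_nonneg_left hdet_mono
    _ = finner (deriv ρ A.det • cof A - deriv ρ B.det • cof B) (A - B) := by
        rw [finner_smul_sub_smul, finner_cof_sub_left, finner_cof_sub_right]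
        ring

/-- (ρ'(det A) cof A − ρ'(det B) cof B)·(A − B) ≥ −γ|A − B|². -/
theorem nonlinear_term_lower_bound (ρ : ℝ → ℝ) (γ : ℝ) (hγ : 0 < γ)
    (hρ : ContDiff ℝ 1 ρ) (hconv : ConvexOn ℝ Set.univ ρ)
    (hbound : ∀ s : ℝ, 0 ≤ deriv ρ s ∧ deriv ρ s ≤ γ)
    (A B : Matrix (Fin 2) (Fin 2) ℝ) :
    -γ * ∑ i : Fin 2, ∑ j : Fin 2, (A i j - B i j) ^ 2 ≤
      finner (deriv ρ A.det • cof A - deriv ρ B.det • cof B) (A - B) :=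
  nonlinear_term_lower_bound_general ρ γ hρ hconv hbound A B
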